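/- arXiv:2206.15434 — 4 statements merged into one kernel-verified Lean document; each statement's English description precedes it below -/
import Mathlib

section
/- Define for each integer j ≥ 0 the formal power series g_{2j-1}(t) = Σ_{n≥0} C(n+j,n)·C(n+j-1,n)·n!·t^n and g_{2j}(t) = Σ_{n≥0} C(n+j,n)²·n!·t^n (over ℚ), and set α_{2j-1} = α_{2j} = j. Then for all k ≥ 0, g_k(t) − g_{k-1}(t) = α_{k+1}·t·g_{k+1}(t), where g_{-1}(t) = 1. -/
/-! The coefficient of `tⁿ` in `g_k` is `(a)ₙ (b)ₙ / n!` with `a = α_{k+1}`, `b = α_{k+2}`, because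
`C(n+j,n)·n! = (j+1)ₙ` and `C(n+j-1,n)·n! = (j)ₙ`, the latter also for `j = 0` thanks to truncated
subtraction. So `g_k = ₂F₀(α_{k+1}, α_{k+2}; t)`, and since `α_{k+2} = α_k + 1` the recurrence is the
contiguous relation `₂F₀(a+1, b) - ₂F₀(a, b) = b t ₂F₀(a+1, b+1)` at `a = α_k`, `b = α_{k+1}`,
which follows from `(a+1)ₙ₊₁ - (a)ₙ₊₁ = (n+1)(a+1)ₙ` and `(b)ₙ₊₁ = b (b+1)ₙ`. -/

open PowerSeries

/-- The series `g_k` of the Euler–Gauss recurrence for `Σ n! tⁿ`: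
for `k = 2j-1` (odd), coefficient of `tⁿ` is `C(n+j,n)·C(n+j-1,n)·n!`;
for `k = 2j` (even), it is `C(n+j,n)²·n!`.  Note that the odd formula with
`j = 0` (i.e. `k = -1`) gives the constant series `1`. -/
noncomputable def eulerG (k : ℤ) : PowerSeries ℚ :=
  PowerSeries.mk fun n =>
    letI j : ℕ := ((k + 1) / 2).toNat
    if k % 2 = 0 then ((Nat.choose (n + j) n : ℚ)) ^ 2 * (n.factorial : ℚ)
    else (Nat.choose (n + j) n : ℚ) * (Nat.choose (n + j - 1) n : ℚ) * (n.factorial : ℚ)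

/-- The coefficients `α_{2j-1} = α_{2j} = j`, i.e. `α_k = ⌈k/2⌉`. -/
def eulerAlpha (k : ℤ) : ℚ := (((k + 1) / 2 : ℤ) : ℚ)

open Polynomial in
theorem ascPochhammer_eval_add_one_sub {K : Type*} [CommRing K] (n : ℕ) (x : K) :
    (ascPochhammer K (n + 1)).eval (x + 1) - (ascPochhammer K (n + 1)).eval x =
      (n + 1) * (ascPochhammer K n).eval (x + 1) := by
  have h := congr_arg (eval x) (ascPochhammer_succ_comp_X_add_one (S := K) n)
  simp only [eval_comp, eval_add, eval_X, eval_one, nsmul_eq_mul, eval_mul, eval_natCast] at h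
  rw [h]
  push_cast
  ring

theorem ascPochhammer_eval_natCast_eq_choose {K : Type*} [CommSemiring K] (n j : ℕ) :
    (ascPochhammer K n).eval (j : K) = (n + j - 1).choose n * n.factorial := by
  rw [ascPochhammer_nat_eq_natCast_ascFactorial, Nat.ascFactorial_eq_factorial_mul_choose',
    add_comm j n]
  push_cast
  ring

open Polynomial in
theorem ascPochhammer_succ_eval_left {K : Type*} [CommSemiring K] (n : ℕ) (x : K) :
    (ascPochhammer K (n + 1)).eval x = x * (ascPochhammer K n).eval (x + 1) := by
  simp [ascPochhammer_succ_left]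

noncomputable def hypergeometric₂F₀ {K : Type*} [Field K] (x y : K) : PowerSeries K :=
  PowerSeries.mk fun n => (ascPochhammer K n).eval x * (ascPochhammer K n).eval y / n.factorial

section

variable {K : Type*} [Field K]

@[simp]
theorem coeff_hypergeometric₂F₀ (x y : K) (n : ℕ) :
    PowerSeries.coeff n (hypergeometric₂F₀ x y) =
      (ascPochhammer K n).eval x * (ascPochhammer K n).eval y / n.factorial :=
  PowerSeries.coeff_mk _ _

theorem hypergeometric₂F₀_comm (x y : K) : hypergeometric₂F₀ x y = hypergeometric₂F₀ y x := by
  ext n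
  simp only [coeff_hypergeometric₂F₀, mul_comm]

@[simp]
theorem hypergeometric₂F₀_zero_left (y : K) : hypergeometric₂F₀ 0 y = 1 := by
  ext n
  rcases n with _ | n <;> simp [PowerSeries.coeff_one]

theorem hypergeometric₂F₀_add_one_sub [CharZero K] (x y : K) :
    hypergeometric₂F₀ (x + 1) y - hypergeometric₂F₀ x y =
      PowerSeries.C y * PowerSeries.X * hypergeometric₂F₀ (x + 1) (y + 1) := by
  refine PowerSeries.ext fun n => ?_
  rw [mul_assoc, PowerSeries.coeff_C_mul, map_sub]
  rcases n with _ | n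
  · simp
  rw [PowerSeries.coeff_succ_X_mul, coeff_hypergeometric₂F₀, coeff_hypergeometric₂F₀,
    coeff_hypergeometric₂F₀, ← sub_div, ← sub_mul, ascPochhammer_eval_add_one_sub,
    ascPochhammer_succ_eval_left n y, Nat.factorial_succ, Nat.cast_mul]
  field_simp
  push_cast
  ring

end

theorem eulerAlpha_add_two (k : ℤ) : eulerAlpha (k + 2) = eulerAlpha k + 1 := by
  rw [eulerAlpha, eulerAlpha, show k + 2 + 1 = k + 1 + 2 * 1 by ring,
    Int.add_mul_ediv_left _ _ two_ne_zero]
  push_cast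
  ring

theorem eulerAlpha_eq_natCast {k : ℤ} {j : ℕ} (h : (k + 1) / 2 = j) : eulerAlpha k = j := by
  rw [eulerAlpha, h, Int.cast_natCast]

theorem eulerG_eq_hypergeometric₂F₀ (k : ℤ) (hk : -1 ≤ k) :
    eulerG k = hypergeometric₂F₀ (eulerAlpha (k + 1)) (eulerAlpha (k + 2)) := by
  obtain ⟨j, rfl | rfl⟩ : ∃ j : ℕ, k = 2 * j - 1 ∨ k = 2 * j := ⟨((k + 1) / 2).toNat, by omega⟩
  · rw [eulerAlpha_eq_natCast (j := j) (by omega), eulerAlpha_eq_natCast (j := j + 1) (by omega)]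
    ext n
    have hj : ((2 * j - 1 + 1 : ℤ) / 2).toNat = j := by omega
    simp only [eulerG, PowerSeries.coeff_mk, coeff_hypergeometric₂F₀, hj,
      ascPochhammer_eval_natCast_eq_choose, show n + (j + 1) - 1 = n + j by omega,
      if_neg (show (2 * j - 1 : ℤ) % 2 ≠ 0 by omega)]
    field_simp
  · rw [eulerAlpha_eq_natCast (j := j + 1) (by omega), eulerAlpha_eq_natCast (j := j + 1) (by omega)]
    ext n
    have hj : ((2 * j + 1 : ℤ) / 2).toNat = j := by omega
    simp only [eulerG, PowerSeries.coeff_mk, coeff_hypergeometric₂F₀, hj,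
      ascPochhammer_eval_natCast_eq_choose, show n + (j + 1) - 1 = n + j by omega,
      if_pos (show (2 * j : ℤ) % 2 = 0 by omega)]
    field_simp

/-- Euler–Gauss recurrence: for all `k ≥ 0`,
`g_k(t) − g_{k-1}(t) = α_{k+1}·t·g_{k+1}(t)`, where `g_{-1} = 1`. -/
theorem eulerG_recurrence :
    (eulerG (-1) = 1) ∧
    ∀ k : ℤ, 0 ≤ k →
      eulerG k - eulerG (k - 1) =
        PowerSeries.C (R := ℚ) (eulerAlpha (k + 1)) * PowerSeries.X * eulerG (k + 1) := by
  refine ⟨?_, fun k hk => ?_⟩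
  · rw [eulerG_eq_hypergeometric₂F₀ (-1) le_rfl]
    norm_num [eulerAlpha]
  rw [eulerG_eq_hypergeometric₂F₀ k (by omega), eulerG_eq_hypergeometric₂F₀ (k - 1) (by omega),
    eulerG_eq_hypergeometric₂F₀ (k + 1) (by omega), sub_add_cancel, show k - 1 + 2 = k + 1 by ring,
    show k + 1 + 1 = k + 2 by ring, eulerAlpha_add_two k, eulerAlpha_add_two (k + 1),
    hypergeometric₂F₀_comm (eulerAlpha (k + 1))]
  exact hypergeometric₂F₀_add_one_sub _ _
end

section
/- Fix a in a commutative ℚ-algebra. Define for j ≥ 0 the formal power series g_{2j-1}(t) = Σ_{n≥0} (a+j)^{(n)}·C(n+j-1,n)·t^n and g_{2j}(t) = Σ_{n≥0} (a+j)^{(n)}·C(n+j,n)·t^n, where x^{(n)} = x(x+1)···(x+n-1) is the rising factorial, and set α_{2j-1} = a+j-1, α_{2j} = j. Then for all k ≥ 0, g_k(t) − g_{k-1}(t) = α_{k+1}·t·g_{k+1}(t). -/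
/-!
Both recurrences are coefficientwise identities. Write `x = a + j`. For `k = 2j` the coefficient of
`tⁿ⁺¹` on the left is `x⁽ⁿ⁺¹⁾ (C(n+j+1, n+1) - C(n+j, n+1)) = x (x+1)⁽ⁿ⁾ C(n+j, n)` by Pascal's
rule. For `k = 2j+1` it is `((x+1)⁽ⁿ⁺¹⁾ - x⁽ⁿ⁺¹⁾) C(n+j+1, n+1) = (n+1) (x+1)⁽ⁿ⁾ C(n+j+1, n+1)`,
and `(n+1) C(n+j+1, n+1) = (j+1) C(n+j+1, n)`.
-/

open PowerSeries

variable {R : Type*}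

/-- Rising factorial `x⁽ⁿ⁾ = x(x+1)⋯(x+n-1)`. -/
noncomputable def risingFac [CommRing R] (x : R) (n : ℕ) : R :=
  (ascPochhammer R n).eval x

/-- The series `g_k` of the Euler–Gauss recurrence for `Σ a⁽ⁿ⁾ tⁿ`:
for `k = 2j-1` (odd), coefficient of `tⁿ` is `(a+j)⁽ⁿ⁾·C(n+j-1,n)`;
for `k = 2j` (even), it is `(a+j)⁽ⁿ⁾·C(n+j,n)`.  The odd formula with `j = 0`
(`k = -1`) gives the constant series `1`. -/
noncomputable def eulerGa [CommRing R] [Algebra ℚ R] (a : R) (k : ℤ) : PowerSeries R :=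
  PowerSeries.mk fun n =>
    letI j : ℕ := ((k + 1) / 2).toNat
    if k % 2 = 0 then risingFac (a + (j : R)) n * (Nat.choose (n + j) n : R)
    else risingFac (a + (j : R)) n * (Nat.choose (n + j - 1) n : R)

/-- The coefficients `α_{2j-1} = a+j-1`, `α_{2j} = j`. -/
noncomputable def eulerAlphaA [CommRing R] [Algebra ℚ R] (a : R) (k : ℤ) : R :=
  if k % 2 = 0 then ((k / 2 : ℤ) : R)
  else a + (((k + 1) / 2 : ℤ) : R) - 1

section RisingFac

variable [CommRing R]

lemma risingFac_zero (x : R) : risingFac x 0 = 1 := by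
  simp [risingFac]

lemma risingFac_succ_left (x : R) (n : ℕ) :
    risingFac x (n + 1) = x * risingFac (x + 1) n := by
  simp [risingFac, ascPochhammer_succ_left, Polynomial.eval_comp]

lemma risingFac_succ_right (x : R) (n : ℕ) :
    risingFac x (n + 1) = risingFac x n * (x + n) :=
  ascPochhammer_succ_eval n x

lemma risingFac_add_one_succ_sub (x : R) (n : ℕ) :
    risingFac (x + 1) (n + 1) - risingFac x (n + 1) = (n + 1) * risingFac (x + 1) n := by
  rw [risingFac_succ_right, risingFac_succ_left]
  ring

end RisingFac

lemma Nat.succ_mul_choose_add_succ (n j : ℕ) :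
    (n + 1) * (n + j + 1).choose (n + 1) = (j + 1) * (n + j + 1).choose n := by
  have h := Nat.choose_succ_right_eq (n + j + 1) n
  rw [show n + j + 1 - n = j + 1 by omega] at h
  linarith

section EulerGa

variable [CommRing R] [Algebra ℚ R] (a : R) (j : ℕ)

lemma coeff_eulerGa_two_mul (n : ℕ) :
    coeff n (eulerGa a (2 * j)) = risingFac (a + j) n * ((n + j).choose n : R) := by
  have hj : ((2 * (j : ℤ) + 1) / 2).toNat = j := by omega
  simp [eulerGa, hj]

lemma coeff_eulerGa_two_mul_sub_one (n : ℕ) :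
    coeff n (eulerGa a (2 * j - 1)) = risingFac (a + j) n * ((n + j - 1).choose n : R) := by
  have hj : ((2 * (j : ℤ) - 1 + 1) / 2).toNat = j := by omega
  have hodd : (2 * (j : ℤ) - 1) % 2 ≠ 0 := by omega
  simp only [eulerGa, coeff_mk, hj, hodd, if_false]

lemma eulerAlphaA_two_mul : eulerAlphaA a (2 * j) = j := by
  have hj : (2 * (j : ℤ)) / 2 = j := by omega
  simp [eulerAlphaA, hj]

lemma eulerAlphaA_two_mul_add_one : eulerAlphaA a (2 * j + 1) = a + j := by
  have hj : (2 * (j : ℤ) + 1 + 1) / 2 = j + 1 := by omega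
  have hodd : (2 * (j : ℤ) + 1) % 2 ≠ 0 := by omega
  simp only [eulerAlphaA, hodd, if_false, hj]
  push_cast
  ring

lemma eulerGa_two_mul_sub :
    eulerGa a (2 * j) - eulerGa a (2 * j - 1) =
      C (eulerAlphaA a (2 * j + 1)) * X * eulerGa a (2 * j + 1) := by
  rw [eulerAlphaA_two_mul_add_one, show (2 * j + 1 : ℤ) = 2 * (j + 1 : ℕ) - 1 by push_cast; ring]
  ext (_ | n)
  · simp only [map_sub, mul_assoc, coeff_C_mul, coeff_zero_X_mul, mul_zero, coeff_eulerGa_two_mul,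
      coeff_eulerGa_two_mul_sub_one, risingFac_zero, Nat.choose_zero_right, sub_self]
  · have pascal : (n + j + 1).choose (n + 1) = (n + j).choose n + (n + j).choose (n + 1) :=
      Nat.choose_succ_succ' (n + j) n
    rw [map_sub, mul_assoc, coeff_C_mul, coeff_succ_X_mul, coeff_eulerGa_two_mul,
      coeff_eulerGa_two_mul_sub_one, coeff_eulerGa_two_mul_sub_one, risingFac_succ_left,
      show n + 1 + j = n + j + 1 by omega, Nat.add_sub_cancel, pascal,
      show n + (j + 1) - 1 = n + j by omega]
    push_cast
    rw [← add_assoc]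
    ring

lemma eulerGa_two_mul_add_one_sub :
    eulerGa a (2 * j + 1) - eulerGa a (2 * j) =
      C (eulerAlphaA a (2 * j + 1 + 1)) * X * eulerGa a (2 * j + 1 + 1) := by
  rw [show (2 * j + 1 + 1 : ℤ) = 2 * (j + 1 : ℕ) by push_cast; ring, eulerAlphaA_two_mul,
    show (2 * j + 1 : ℤ) = 2 * (j + 1 : ℕ) - 1 by push_cast; ring]
  ext (_ | n)
  · simp only [map_sub, mul_assoc, coeff_C_mul, coeff_zero_X_mul, mul_zero, coeff_eulerGa_two_mul,
      coeff_eulerGa_two_mul_sub_one, risingFac_zero, Nat.choose_zero_right, sub_self]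
  · have key : ((n : R) + 1) * ((n + j + 1).choose (n + 1) : R) =
        ((j : R) + 1) * ((n + j + 1).choose n : R) := by
      exact_mod_cast congrArg (Nat.cast : ℕ → R) (Nat.succ_mul_choose_add_succ n j)
    have rising := risingFac_add_one_succ_sub (a + j) n
    rw [map_sub, mul_assoc, coeff_C_mul, coeff_succ_X_mul, coeff_eulerGa_two_mul,
      coeff_eulerGa_two_mul, coeff_eulerGa_two_mul_sub_one,
      show n + 1 + (j + 1) - 1 = n + j + 1 by omega, show n + 1 + j = n + j + 1 by omega,
      show n + (j + 1) = n + j + 1 by omega]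
    push_cast at rising ⊢
    rw [← add_assoc]
    linear_combination ((n + j + 1).choose (n + 1) : R) * rising +
      risingFac (a + j + 1) n * key

end EulerGa

/-- Euler–Gauss recurrence for rising powers: for all `k ≥ 0`,
`g_k(t) − g_{k-1}(t) = α_{k+1}·t·g_{k+1}(t)`. -/
theorem eulerGa_recurrence [CommRing R] [Algebra ℚ R] (a : R) :
    ∀ k : ℤ, 0 ≤ k →
      eulerGa a k - eulerGa a (k - 1) =
        PowerSeries.C (eulerAlphaA a (k + 1)) * PowerSeries.X * eulerGa a (k + 1) := by
  intro k hk
  lift k to ℕ using hk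
  obtain ⟨j, rfl | rfl⟩ := Nat.even_or_odd' k
  · push_cast
    exact eulerGa_two_mul_sub a j
  · push_cast
    rw [add_sub_cancel_right]
    exact eulerGa_two_mul_add_one_sub a j
end

section
/- Define for j ≥ 0 the formal power series g_{2j-1}(t) = Σ_{n≥0} [n+j-1,n]_q · q^{n(n+2j-1)/2} · t^n and g_{2j}(t) = Σ_{n≥0} [n+j,n]_q · q^{n(n+2j-1)/2} · t^n (with g_{-1} = 1), and set α_{2j-1} = q^{2j-2} and α_{2j} = q^{j-1}(q^j − 1). Then for all k ≥ 0, g_k(t) − g_{k-1}(t) = α_{k+1}·t·g_{k+1}(t). -/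
open PowerSeries

/-- The indeterminate `q`, as an element of the field `ℚ(q)`. -/
noncomputable def qq : RatFunc ℚ := RatFunc.X

/-- The q-Pochhammer symbol `(q;q)_n = ∏_{j=0}^{n-1} (1 − q^{j+1})`. -/
noncomputable def qPoch (n : ℕ) : RatFunc ℚ :=
  ∏ j ∈ Finset.range n, (1 - qq ^ (j + 1))

/-- The Gaussian (q-)binomial coefficient `[n,k]_q`, vanishing when `k < 0` or `k > n`. -/
noncomputable def qBinom (n k : ℤ) : RatFunc ℚ :=
  if 0 ≤ k ∧ k ≤ n then qPoch n.toNat / (qPoch k.toNat * qPoch (n - k).toNat) else 0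

/-- The series `g_k` for the partial theta function:
`g_{2j-1}(t) = Σ [n+j-1,n]_q q^{n(n+2j-1)/2} tⁿ`,
`g_{2j}(t) = Σ [n+j,n]_q q^{n(n+2j-1)/2} tⁿ`, and `g_{-1} = 1`. -/
noncomputable def thetaG (k : ℤ) : PowerSeries (RatFunc ℚ) :=
  if k = -1 then 1 else
  PowerSeries.mk fun n =>
    letI j : ℤ := (k + 1) / 2
    (if k % 2 = 0 then qBinom ((n : ℤ) + j) (n : ℤ)
     else qBinom ((n : ℤ) + j - 1) (n : ℤ)) *
      qq ^ ((n : ℤ) * ((n : ℤ) + 2 * j - 1) / 2)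

/-- The coefficients `α_{2j-1} = q^{2j-2}` and `α_{2j} = q^{j-1}(q^j − 1)`. -/
noncomputable def thetaAlpha (k : ℤ) : RatFunc ℚ :=
  if k % 2 = 0 then qq ^ (k / 2 - 1) * (qq ^ (k / 2) - 1)
  else qq ^ (k - 1)

/-!
Compare coefficients of `tⁿ⁺¹`. For `k = 2j` the recurrence is the q-Pascal rule
`[m+j+1, m+1] = q^j [m+j, m] + [m+j, m+1]`, and for `k = 2j+1` it is the absorption identity
`[m+j+1, m+1] (1 − q^{m+1}) = [m+j+1, m] (1 − q^{j+1})`; the powers of `q` agree because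
`C(m+1, 2) = C(m, 2) + m`.
-/

lemma one_sub_qq_pow_ne_zero {m : ℕ} (hm : m ≠ 0) : (1 : RatFunc ℚ) - qq ^ m ≠ 0 := by
  rw [qq, ← RatFunc.algebraMap_X, ← map_pow, ← map_one (algebraMap (Polynomial ℚ) _),
    ← map_sub]
  refine RatFunc.algebraMap_ne_zero fun h => ?_
  simpa [Polynomial.coeff_X_pow, hm.symm] using congrArg (Polynomial.coeff · 0) h

lemma qPoch_ne_zero (n : ℕ) : qPoch n ≠ 0 :=
  Finset.prod_ne_zero_iff.mpr fun j _ => one_sub_qq_pow_ne_zero j.succ_ne_zero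

lemma qPoch_succ (n : ℕ) : qPoch (n + 1) = qPoch n * (1 - qq ^ (n + 1)) :=
  Finset.prod_range_succ _ n

lemma qPoch_zero : qPoch 0 = 1 := rfl

lemma qBinom_add_eq_qPoch_div (k d : ℕ) :
    qBinom ((k + d : ℕ) : ℤ) k = qPoch (k + d) / (qPoch k * qPoch d) := by
  rw [qBinom, if_pos (by omega), Int.toNat_natCast, Int.toNat_natCast,
    show ((k + d : ℕ) - k : ℤ).toNat = d by omega]

lemma qBinom_of_lt {n k : ℤ} (h : n < k) : qBinom n k = 0 :=
  if_neg fun hk => by omega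

lemma qBinom_zero_right (n : ℕ) : qBinom n 0 = 1 := by
  simpa only [zero_add, Nat.cast_zero, qPoch_zero, one_mul, div_self (qPoch_ne_zero n)]
    using qBinom_add_eq_qPoch_div 0 n

lemma qBinom_self (n : ℕ) : qBinom n n = 1 := by
  simpa only [add_zero, qPoch_zero, mul_one, div_self (qPoch_ne_zero n)]
    using qBinom_add_eq_qPoch_div n 0

lemma qBinom_succ_succ (k d : ℕ) :
    qBinom ((k + d + 1 : ℕ) : ℤ) (k + 1 : ℕ) =
      qq ^ d * qBinom ((k + d : ℕ) : ℤ) k + qBinom ((k + d : ℕ) : ℤ) (k + 1 : ℕ) := by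
  rcases d with _ | e
  · rw [add_zero, qBinom_self, qBinom_self, qBinom_of_lt (by omega)]
    ring
  rw [show k + (e + 1) + 1 = k + 1 + (e + 1) by ring, show k + (e + 1) = k + 1 + e by ring,
    qBinom_add_eq_qPoch_div, qBinom_add_eq_qPoch_div, show k + 1 + e = k + (e + 1) by ring,
    qBinom_add_eq_qPoch_div, show k + 1 + (e + 1) = k + (e + 1) + 1 by ring,
    qPoch_succ (k + (e + 1)), qPoch_succ k, qPoch_succ e]
  have := qPoch_ne_zero k
  have := qPoch_ne_zero e
  have := one_sub_qq_pow_ne_zero k.succ_ne_zero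
  have := one_sub_qq_pow_ne_zero e.succ_ne_zero
  field_simp
  ring

lemma qBinom_succ_mul_one_sub (k d : ℕ) :
    qBinom ((k + d + 1 : ℕ) : ℤ) (k + 1 : ℕ) * (1 - qq ^ (k + 1)) =
      qBinom ((k + d + 1 : ℕ) : ℤ) k * (1 - qq ^ (d + 1)) := by
  rw [show k + d + 1 = k + 1 + d by ring, qBinom_add_eq_qPoch_div,
    show k + 1 + d = k + (d + 1) by ring, qBinom_add_eq_qPoch_div, qPoch_succ k, qPoch_succ d]
  have := qPoch_ne_zero k
  have := qPoch_ne_zero d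
  have := one_sub_qq_pow_ne_zero k.succ_ne_zero
  have := one_sub_qq_pow_ne_zero d.succ_ne_zero
  field_simp

lemma natCast_mul_add_two_mul_sub_one_ediv_two (n : ℕ) (j : ℤ) :
    (n * (n + 2 * j - 1)) / 2 = n.choose 2 + j * n := by
  have h : (n.choose 2 : ℤ) * 2 = n * (n - 1) := by
    have : (n.choose 2 : ℚ) * 2 = n * (n - 1) := by rw [Nat.cast_choose_two]; ring
    exact_mod_cast this
  rw [show (n * (n + 2 * j - 1) : ℤ) = (n.choose 2 + j * n) * 2 by linear_combination -h]
  exact Int.mul_ediv_cancel _ two_ne_zero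

lemma coeff_thetaG_two_mul (j n : ℕ) :
    coeff n (thetaG (2 * j)) = qBinom ((n + j : ℕ) : ℤ) n * qq ^ (n.choose 2 + j * n) := by
  rw [thetaG, if_neg (by omega), coeff_mk, if_pos (by omega),
    show (2 * (j : ℤ) + 1) / 2 = j by omega, natCast_mul_add_two_mul_sub_one_ediv_two]
  norm_cast

lemma coeff_thetaG_two_mul_add_one (j n : ℕ) :
    coeff n (thetaG (2 * j + 1)) =
      qBinom ((n + j : ℕ) : ℤ) n * qq ^ (n.choose 2 + (j + 1) * n) := by
  rw [thetaG, if_neg (by omega), coeff_mk, if_neg (by omega),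
    show (2 * (j : ℤ) + 1 + 1) / 2 = j + 1 by omega, natCast_mul_add_two_mul_sub_one_ediv_two,
    ← add_assoc, add_sub_cancel_right]
  norm_cast

lemma coeff_zero_thetaG_two_mul_sub_one (j : ℕ) : coeff 0 (thetaG (2 * j - 1)) = 1 := by
  rcases j with _ | i
  · simp [thetaG]
  · rw [show 2 * ((i + 1 : ℕ) : ℤ) - 1 = 2 * i + 1 by push_cast; ring,
      coeff_thetaG_two_mul_add_one, zero_add, Nat.cast_zero, qBinom_zero_right]
    simp

/-- `g_{-1} = 1` departs from the coefficient formula only in degree `0`. -/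
lemma coeff_succ_thetaG_two_mul_sub_one (j m : ℕ) :
    coeff (m + 1) (thetaG (2 * j - 1)) =
      qBinom ((m + j : ℕ) : ℤ) (m + 1 : ℕ) * qq ^ ((m + 1).choose 2 + j * (m + 1)) := by
  rcases j with _ | i
  · simp [thetaG, qBinom_of_lt]
  · rw [show 2 * ((i + 1 : ℕ) : ℤ) - 1 = 2 * i + 1 by push_cast; ring,
      coeff_thetaG_two_mul_add_one, show m + 1 + i = m + (i + 1) by ring]

lemma thetaAlpha_two_mul_add_one (j : ℕ) : thetaAlpha (2 * j + 1) = qq ^ (2 * j) := by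
  rw [thetaAlpha, if_neg (by omega), add_sub_cancel_right]
  norm_cast

lemma thetaAlpha_two_mul (j : ℕ) :
    thetaAlpha (2 * (j + 1 : ℕ)) = qq ^ j * (qq ^ (j + 1) - 1) := by
  rw [thetaAlpha, if_pos (by omega), show 2 * ((j + 1 : ℕ) : ℤ) / 2 = (j + 1 : ℕ) by omega,
    Nat.cast_succ, add_sub_cancel_right]
  norm_cast

lemma thetaG_two_mul_sub_thetaG (j : ℕ) :
    thetaG (2 * j) - thetaG (2 * j - 1) =
      C (thetaAlpha (2 * j + 1)) * X * thetaG (2 * j + 1) := by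
  ext (_ | m)
  · rw [map_sub, mul_assoc, coeff_C_mul, coeff_zero_X_mul, coeff_thetaG_two_mul,
      coeff_zero_thetaG_two_mul_sub_one]
    simp [qBinom_zero_right]
  rw [map_sub, mul_assoc, coeff_C_mul, coeff_succ_X_mul, coeff_thetaG_two_mul,
    coeff_succ_thetaG_two_mul_sub_one, coeff_thetaG_two_mul_add_one, thetaAlpha_two_mul_add_one,
    Nat.add_right_comm m 1 j, qBinom_succ_succ, Nat.choose_succ_succ', Nat.choose_one_right]
  ring

lemma thetaG_two_mul_add_one_sub_thetaG (j : ℕ) :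
    thetaG (2 * j + 1) - thetaG (2 * j) =
      C (thetaAlpha (2 * (j + 1 : ℕ))) * X * thetaG (2 * (j + 1 : ℕ)) := by
  ext (_ | m)
  · rw [map_sub, mul_assoc, coeff_C_mul, coeff_zero_X_mul, coeff_thetaG_two_mul,
      coeff_thetaG_two_mul_add_one]
    simp
  rw [map_sub, mul_assoc, coeff_C_mul, coeff_succ_X_mul, coeff_thetaG_two_mul,
    coeff_thetaG_two_mul_add_one, coeff_thetaG_two_mul, thetaAlpha_two_mul,
    Nat.add_right_comm m 1 j, ← add_assoc, Nat.choose_succ_succ', Nat.choose_one_right]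
  linear_combination (-qq ^ (m + m.choose 2 + j * (m + 1))) * qBinom_succ_mul_one_sub m j

/-- Euler–Gauss recurrence for the partial theta function: for all `k ≥ 0`,
`g_k(t) − g_{k-1}(t) = α_{k+1}·t·g_{k+1}(t)`. -/
theorem thetaG_recurrence :
    ∀ k : ℤ, 0 ≤ k →
      thetaG k - thetaG (k - 1) =
        PowerSeries.C (thetaAlpha (k + 1)) * PowerSeries.X * thetaG (k + 1) := by
  intro k hk
  lift k to ℕ using hk
  obtain ⟨j, rfl | rfl⟩ := Nat.even_or_odd' k
  · simpa using thetaG_two_mul_sub_thetaG j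
  · convert thetaG_two_mul_add_one_sub_thetaG j using 3 <;> push_cast <;> ring_nf
end

section
/- Define Bell-polynomial arrays g_{2j-1}(t) = Σ_{n≥0} (Σ_{k=0}^n S(n+j,k+j)·C(k+j−1,k)·x^k·y^{n−k})·t^n and g_{2j}(t) = Σ_{n≥0} (Σ_{k=0}^n S(n+j,k+j)·C(k+j,k)·x^k·y^{n−k})·t^n as formal power series over ℚ[x,y], with g_{-1} = 1, and set α_{2k-1} = x, α_{2k} = k·y. Then for all k ≥ 0, g_k(t) − g_{k-1}(t) = α_{k+1}·t·g_{k+1}(t). -/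
open PowerSeries

/-- Stirling numbers of the second kind. -/
def stirling2 : ℕ → ℕ → ℕ
  | 0, k => if k = 0 then 1 else 0
  | _ + 1, 0 => 0
  | n + 1, k + 1 => (k + 1) * stirling2 n (k + 1) + stirling2 n k

/-- The polynomial ring `ℚ[x,y]`, with `x = X 0` and `y = X 1`. -/
abbrev Rxy : Type := MvPolynomial (Fin 2) ℚ

/-- The series `g_k` of the Euler–Gauss recurrence for the Bell polynomials:
for `k = 2j-1` (odd), the coefficient of `tⁿ` is
`Σ_{i=0}^n S(n+j,i+j)·C(i+j−1,i)·xⁱ·y^{n−i}`, and for `k = 2j` (even) it is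
`Σ_{i=0}^n S(n+j,i+j)·C(i+j,i)·xⁱ·y^{n−i}`.  The odd formula with `j = 0`
(`k = -1`) gives the constant series `1`. -/
noncomputable def bellG (k : ℤ) : PowerSeries Rxy :=
  PowerSeries.mk fun n =>
    letI j : ℕ := ((k + 1) / 2).toNat
    ∑ i ∈ Finset.range (n + 1),
      (stirling2 (n + j) (i + j) : Rxy) *
        ((if k % 2 = 0 then Nat.choose (i + j) i else Nat.choose (i + j - 1) i : ℕ) : Rxy) *
        MvPolynomial.X 0 ^ i * MvPolynomial.X 1 ^ (n - i)

/-- The coefficients `α_{2k-1} = x`, `α_{2k} = k·y`. -/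
noncomputable def bellAlpha (i : ℤ) : Rxy :=
  if i % 2 = 0 then ((i / 2 : ℤ) : Rxy) * MvPolynomial.X 1
  else MvPolynomial.X 0

/-!
The coefficient of `tⁿ⁺¹` in `g_{2j} − g_{2j−1}` collapses by Pascal's rule
`C(i+j+1, i+1) − C(i+j, i+1) = C(i+j, i)` to `x` times the coefficient of `tⁿ` in `g_{2j+1}`.
In `g_{2j+1} − g_{2j}` the Stirling recurrence `S(m+1, k+1) − S(m, k) = (k+1)·S(m, k+1)` leaves
`(i+j+1)·C(i+j, i) = (j+1)·C(i+j+1, i)` times `S(n+j+1, i+j+1)`, which is `(j+1)·y` times the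
coefficient of `tⁿ` in `g_{2j+2}`.
-/

lemma stirling2_eq_stirlingSecond : stirling2 = Nat.stirlingSecond := by
  funext n k
  induction n generalizing k with
  | zero => cases k <;> rfl
  | succ n ih =>
    cases k with
    | zero => rfl
    | succ k => rw [stirling2, Nat.stirlingSecond_succ_succ, ih, ih]

lemma PowerSeries.mk_sub_mk_eq_C_mul_X_mul_mk {R : Type*} [Ring R] {a b d : ℕ → R} {c : R}
    (h₀ : a 0 = b 0) (hsucc : ∀ n, a (n + 1) - b (n + 1) = c * d n) :
    mk a - mk b = C c * X * mk d := by
  ext (_ | n) <;> simp [mul_assoc, coeff_succ_X_mul, h₀, hsucc]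

section BellCoeff

variable {R : Type*} [CommRing R] (x y : R)

noncomputable def evenBellCoeff (j n : ℕ) : R :=
  ∑ i ∈ Finset.range (n + 1), (Nat.stirlingSecond (n + j) (i + j) : R) *
    ((i + j).choose i : R) * x ^ i * y ^ (n - i)

noncomputable def oddBellCoeff (j n : ℕ) : R :=
  ∑ i ∈ Finset.range (n + 1), (Nat.stirlingSecond (n + j) (i + j) : R) *
    ((i + j - 1).choose i : R) * x ^ i * y ^ (n - i)

@[simp]
lemma evenBellCoeff_zero (j : ℕ) : evenBellCoeff x y j 0 = 1 := by
  simp [evenBellCoeff, Nat.stirlingSecond_self]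

@[simp]
lemma oddBellCoeff_zero (j : ℕ) : oddBellCoeff x y j 0 = 1 := by
  simp [oddBellCoeff, Nat.stirlingSecond_self]

lemma mk_oddBellCoeff_zero : mk (oddBellCoeff x y 0) = 1 := by
  ext n
  rw [coeff_mk, coeff_one, oddBellCoeff, Finset.sum_range_succ']
  cases n <;> simp [Nat.choose_succ_self]

lemma evenBellCoeff_succ_sub_oddBellCoeff_succ (j n : ℕ) :
    evenBellCoeff x y j (n + 1) - oddBellCoeff x y j (n + 1) = x * oddBellCoeff x y (j + 1) n := by
  rw [evenBellCoeff, oddBellCoeff, oddBellCoeff, ← Finset.sum_sub_distrib, Finset.sum_range_succ',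
    Finset.mul_sum]
  simp only [Nat.choose_zero_right, sub_self, add_zero]
  refine Finset.sum_congr rfl fun i _ => ?_
  simp only [Nat.add_right_comm _ 1 j, ← add_assoc, Nat.add_sub_cancel, Nat.add_sub_add_right,
    Nat.choose_succ_succ']
  push_cast
  ring

lemma oddBellCoeff_succ_sub_evenBellCoeff_succ (j n : ℕ) :
    oddBellCoeff x y (j + 1) (n + 1) - evenBellCoeff x y j (n + 1) =
      ((j + 1 : ℕ) : R) * y * evenBellCoeff x y (j + 1) n := by
  rw [oddBellCoeff, evenBellCoeff, evenBellCoeff, ← Finset.sum_sub_distrib, Finset.sum_range_succ,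
    Finset.mul_sum]
  simp only [Nat.stirlingSecond_self, Nat.add_sub_add_right, ← add_assoc, Nat.add_sub_cancel,
    sub_self, add_zero]
  refine Finset.sum_congr rfl fun i hi => ?_
  have hin : i ≤ n := Nat.lt_succ_iff.mp (Finset.mem_range.mp hi)
  have choose_mul : (i + j).choose i * (i + j + 1) = (i + j + 1).choose i * (j + 1) := by
    rw [Nat.choose_mul_succ_eq, show i + j + 1 - i = j + 1 by omega]
  replace choose_mul := congrArg (Nat.cast : ℕ → R) choose_mul
  push_cast at choose_mul
  rw [Nat.add_right_comm n 1 j, Nat.stirlingSecond_succ_succ, show n + 1 - i = n - i + 1 by omega]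
  push_cast
  linear_combination
    ((n + j + 1).stirlingSecond (i + j + 1) * x ^ i * y ^ (n - i + 1) : R) * choose_mul

end BellCoeff

lemma bellG_eq_mk_evenBellCoeff {k : ℤ} {j : ℕ} (h : k = 2 * j) :
    bellG k = mk (evenBellCoeff (MvPolynomial.X 0) (MvPolynomial.X 1) j) := by
  have hj : ((k + 1) / 2).toNat = j := by omega
  simp only [bellG, stirling2_eq_stirlingSecond, hj, if_pos (show k % 2 = 0 by omega)]
  rfl

lemma bellG_eq_mk_oddBellCoeff {k : ℤ} {j : ℕ} (h : k = 2 * j - 1) :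
    bellG k = mk (oddBellCoeff (MvPolynomial.X 0) (MvPolynomial.X 1) j) := by
  have hj : ((k + 1) / 2).toNat = j := by omega
  simp only [bellG, stirling2_eq_stirlingSecond, hj, if_neg (show ¬k % 2 = 0 by omega)]
  rfl

lemma bellAlpha_of_emod_two_eq_one {i : ℤ} (h : i % 2 = 1) : bellAlpha i = MvPolynomial.X 0 := by
  rw [bellAlpha, if_neg (by omega)]

lemma bellAlpha_of_eq_two_mul {i : ℤ} {j : ℕ} (h : i = 2 * j) :
    bellAlpha i = (j : Rxy) * MvPolynomial.X 1 := by
  rw [bellAlpha, if_pos (by omega), show i / 2 = j by omega, Int.cast_natCast]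

/-- Euler–Gauss recurrence for the Bell polynomials: `g_{-1} = 1` and, for all
`k ≥ 0`, `g_k(t) − g_{k-1}(t) = α_{k+1}·t·g_{k+1}(t)`. -/
theorem bellG_recurrence :
    (bellG (-1) = 1) ∧
    ∀ k : ℤ, 0 ≤ k →
      bellG k - bellG (k - 1) =
        PowerSeries.C (R := Rxy) (bellAlpha (k + 1)) * PowerSeries.X * bellG (k + 1) := by
  refine ⟨by rw [bellG_eq_mk_oddBellCoeff (j := 0) (by norm_num), mk_oddBellCoeff_zero], ?_⟩
  intro k hk
  obtain ⟨j, rfl | rfl⟩ : ∃ j : ℕ, k = 2 * j ∨ k = 2 * j + 1 := ⟨(k / 2).toNat, by omega⟩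
  · rw [bellG_eq_mk_evenBellCoeff rfl, bellG_eq_mk_oddBellCoeff (j := j) rfl,
      bellG_eq_mk_oddBellCoeff (j := j + 1) (by push_cast; ring),
      bellAlpha_of_emod_two_eq_one (by omega)]
    exact mk_sub_mk_eq_C_mul_X_mul_mk (by simp) (evenBellCoeff_succ_sub_oddBellCoeff_succ _ _ j)
  · rw [bellG_eq_mk_oddBellCoeff (j := j + 1) (by push_cast; ring),
      bellG_eq_mk_evenBellCoeff (j := j) (by ring),
      bellG_eq_mk_evenBellCoeff (j := j + 1) (by push_cast; ring),
      bellAlpha_of_eq_two_mul (j := j + 1) (by push_cast; ring)]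
    exact mk_sub_mk_eq_C_mul_X_mul_mk (by simp) (oddBellCoeff_succ_sub_evenBellCoeff_succ _ _ j)
end
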